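/- Let ℋ be a weak involutive basis of a left ideal I in a polynomial algebra of solvable type over a field, with respect to an involutive division L. Then there exists a subset ℋ' ⊆ ℋ which is a strong involutive basis of I. -/

import Mathlib

/-- Polynomials in `n` variables over `R`, represented by their coefficient families
indexed by multi indices. -/
abbrev SPoly (R : Type) [CommRing R] (n : ℕ) := (Fin n → ℕ) →₀ R

/-- The leading exponent of a polynomial with respect to a term order (the maximal
element of its support; `0` for the zero polynomial). -/
noncomputable def lexp {R : Type} [CommRing R] {n : ℕ} (ord : LinearOrder (Fin n → ℕ))
    (f : SPoly R n) : Fin n → ℕ :=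
  (@Finset.max _ ord f.support).unbotD 0

/-- A polynomial algebra of solvable type `(P, ⋆, ≺)`: the `R`-module `R[x₁,…,xₙ]`
equipped with an associative unital multiplication `⋆` such that `r ⋆ f = r • f` for
scalars, and with respect to a term order `≺` (a monoid order) the leading exponent of
`x^μ ⋆ x^ν` is `μ + ν` and of `x^μ ⋆ r` (for `r ≠ 0`) is `μ`. -/
structure SolvMul (R : Type) [CommRing R] (n : ℕ) (ord : LinearOrder (Fin n → ℕ)) where
  star : SPoly R n → SPoly R n → SPoly R n
  zero_min : ∀ μ : Fin n → ℕ, ord.le 0 μ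
  add_compat : ∀ μ ν σ : Fin n → ℕ, ord.lt μ ν → ord.lt (μ + σ) (ν + σ)
  star_assoc : ∀ f g h : SPoly R n, star (star f g) h = star f (star g h)
  star_add : ∀ f g h : SPoly R n, star f (g + h) = star f g + star f h
  add_star : ∀ f g h : SPoly R n, star (f + g) h = star f h + star g h
  one_star : ∀ f : SPoly R n, star (Finsupp.single 0 1) f = f
  star_one : ∀ f : SPoly R n, star f (Finsupp.single 0 1) = f
  scalar_star : ∀ (r : R) (f : SPoly R n), star (Finsupp.single 0 r) f = r • f
  mono_mono : ∀ μ ν : Fin n → ℕ,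
    star (Finsupp.single μ 1) (Finsupp.single ν 1) ≠ 0 ∧
      lexp ord (star (Finsupp.single μ 1) (Finsupp.single ν 1)) = μ + ν
  mono_scalar : ∀ (μ : Fin n → ℕ) (r : R), r ≠ 0 →
    star (Finsupp.single μ 1) (Finsupp.single 0 r) ≠ 0 ∧
      lexp ord (star (Finsupp.single μ 1) (Finsupp.single 0 r)) = μ


/-- The restricted cone of `ν` determined by a set `N` of multiplicative indices. -/
def rcone {n : ℕ} (N : Set (Fin n)) (ν : Fin n → ℕ) : Set (Fin n → ℕ) :=
  {μ | (∀ i, ν i ≤ μ i) ∧ ∀ i ∉ N, μ i = ν i}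

/-- An involutive division on `ℕ^n`. -/
structure InvDiv (n : ℕ) where
  mult : Finset (Fin n → ℕ) → (Fin n → ℕ) → Set (Fin n)
  nested : ∀ (𝒩 : Finset (Fin n → ℕ)), ∀ μ ∈ 𝒩, ∀ ν ∈ 𝒩,
    (rcone (mult 𝒩 μ) μ ∩ rcone (mult 𝒩 ν) ν).Nonempty →
      rcone (mult 𝒩 μ) μ ⊆ rcone (mult 𝒩 ν) ν ∨
        rcone (mult 𝒩 ν) ν ⊆ rcone (mult 𝒩 μ) μ
  mono : ∀ (𝒩 𝒩' : Finset (Fin n → ℕ)), 𝒩' ⊆ 𝒩 → ∀ ν ∈ 𝒩', mult 𝒩 ν ⊆ mult 𝒩' ν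

/-- The set of leading exponents of a finite set of polynomials. -/
noncomputable def leadSet {R : Type} [CommRing R] {n : ℕ} (ord : LinearOrder (Fin n → ℕ))
    (ℋ : Finset (SPoly R n)) : Finset (Fin n → ℕ) :=
  ℋ.image (lexp ord)

/-- The monoid ideal of leading exponents of (the nonzero elements of) a set of
polynomials. -/
def leadExps {R : Type} [CommRing R] {n : ℕ} (ord : LinearOrder (Fin n → ℕ))
    (I : Set (SPoly R n)) : Set (Fin n → ℕ) :=
  {μ | ∃ f ∈ I, f ≠ 0 ∧ lexp ord f = μ}

/-- `P` gives an involutive standard representation of `f` with respect to `ℋ`: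
`f = Σ_{h∈ℋ} P_h ⋆ h`, every `P_h` only involves the multiplicative variables of `h`,
and `le(P_h ⋆ h) ⪯ le(f)`. -/
def IsInvRep {R : Type} [CommRing R] {n : ℕ} (ord : LinearOrder (Fin n → ℕ))
    (A : SolvMul R n ord) (L : InvDiv n) (ℋ : Finset (SPoly R n)) (f : SPoly R n)
    (P : {h // h ∈ ℋ} → SPoly R n) : Prop :=
  f = ∑ h ∈ ℋ.attach, A.star (P h) h.1 ∧
    ∀ h : {h // h ∈ ℋ},
      (∀ μ ∈ (P h).support, ∀ i ∉ L.mult (leadSet ord ℋ) (lexp ord h.1), μ i = 0) ∧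
      ord.le (lexp ord (A.star (P h) h.1)) (lexp ord f)

/-- `ℋ` is a weak involutive basis of the left ideal `I`: `ℋ ⊂ I \ {0}` and the
leading exponents of `ℋ` form a weak involutive basis of the monoid ideal of leading
exponents of `I`. -/
def WeakInvBasis {R : Type} [CommRing R] {n : ℕ} (ord : LinearOrder (Fin n → ℕ))
    (L : InvDiv n) (I : Set (SPoly R n)) (ℋ : Finset (SPoly R n)) : Prop :=
  (↑ℋ : Set (SPoly R n)) ⊆ I ∧ (0 : SPoly R n) ∉ ℋ ∧
    (⋃ μ ∈ leadSet ord ℋ, rcone (L.mult (leadSet ord ℋ) μ) μ) = leadExps ord I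

/-- `ℋ` is a strong involutive basis of `I`: a weak one whose involutive cones are
pairwise disjoint and whose elements have pairwise distinct leading exponents. -/
def StrongInvBasis {R : Type} [CommRing R] {n : ℕ} (ord : LinearOrder (Fin n → ℕ))
    (L : InvDiv n) (I : Set (SPoly R n)) (ℋ : Finset (SPoly R n)) : Prop :=
  WeakInvBasis ord L I ℋ ∧ Set.InjOn (lexp ord) (↑ℋ : Set (SPoly R n)) ∧
    ∀ μ ∈ leadSet ord ℋ, ∀ ν ∈ leadSet ord ℋ, μ ≠ ν →
      Disjoint (rcone (L.mult (leadSet ord ℋ) μ) μ) (rcone (L.mult (leadSet ord ℋ) ν) ν)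

/-!
Elements are discarded from `ℋ` one at a time. If two elements have the same leading
exponent, or two involutive cones meet (and then, by the nesting axiom of `L`, one contains
the other), the element with the smaller cone is dropped. By monotonicity of `L` the
remaining cones can only grow, and they stay inside the leading exponents of `I`, which form
a monoid ideal because `I` is a left ideal and `le(x^σ ⋆ h) = σ + le(h)`. Hence the union of
the cones is unchanged, and when no element can be dropped the basis is strong.
-/

section LeadingExponent

variable {R : Type} [CommRing R] {n : ℕ} (ord : LinearOrder (Fin n → ℕ))

lemma lexp_mem_support {f : SPoly R n} (hf : f ≠ 0) : lexp ord f ∈ f.support := by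
  let _ := ord
  obtain ⟨a, ha⟩ := Finset.max_of_nonempty (Finsupp.support_nonempty_iff.2 hf)
  simpa [lexp, ha] using Finset.mem_of_max ha

lemma le_lexp_of_mem_support {f : SPoly R n} {μ : Fin n → ℕ} (hμ : μ ∈ f.support) :
    ord.le μ (lexp ord f) := by
  let _ := ord
  obtain ⟨a, ha⟩ := Finset.max_of_nonempty ⟨μ, hμ⟩
  simpa [lexp, ha] using Finset.le_max_of_eq hμ ha

lemma lexp_eq_of_forall_le {f : SPoly R n} {τ : Fin n → ℕ} (hτ : f τ ≠ 0)
    (hle : ∀ μ ∈ f.support, ord.le μ τ) : lexp ord f = τ :=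
  have hf : f ≠ 0 := by rintro rfl; exact hτ rfl
  @le_antisymm _ ord.toPartialOrder _ _ (hle _ (lexp_mem_support ord hf))
    (le_lexp_of_mem_support ord (Finsupp.mem_support_iff.2 hτ))

lemma lexp_smul [IsDomain R] {f : SPoly R n} {c : R} (hc : c ≠ 0) :
    lexp ord (c • f) = lexp ord f := by
  rw [lexp, lexp, Finsupp.support_smul_eq hc]

lemma lexp_sum_of_lt {ι : Type*} {s : Finset ι} {F : ι → SPoly R n} {i₀ : ι} (hi₀ : i₀ ∈ s)
    (hF : ∀ i ∈ s, F i ≠ 0)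
    (hlt : ∀ i ∈ s, i ≠ i₀ → ord.lt (lexp ord (F i)) (lexp ord (F i₀))) :
    (∑ i ∈ s, F i) ≠ 0 ∧ lexp ord (∑ i ∈ s, F i) = lexp ord (F i₀) := by
  let _ : Preorder (Fin n → ℕ) := ord.toPreorder
  set τ := lexp ord (F i₀)
  have hcoeff : (∑ i ∈ s, F i) τ = F i₀ τ := by
    rw [Finset.sum_apply']
    refine Finset.sum_eq_single_of_mem i₀ hi₀ fun i hi hne => ?_
    by_contra hτi
    exact (le_lexp_of_mem_support ord (Finsupp.mem_support_iff.2 hτi)).not_gt (hlt i hi hne)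
  have hτ : (∑ i ∈ s, F i) τ ≠ 0 := by
    rw [hcoeff]
    exact Finsupp.mem_support_iff.1 (lexp_mem_support ord (hF i₀ hi₀))
  refine ⟨fun h0 => hτ (by rw [h0]; rfl), lexp_eq_of_forall_le ord hτ fun μ hμ => ?_⟩
  obtain ⟨i, hi, hμi⟩ := Finset.mem_biUnion.1 (Finsupp.support_finsetSum hμ)
  have hle := le_lexp_of_mem_support ord hμi
  rcases eq_or_ne i i₀ with rfl | hne
  · exact hle
  · exact hle.trans (hlt i hi hne).le

end LeadingExponent

namespace SolvMul

variable {R : Type} [CommRing R] {n : ℕ} {ord : LinearOrder (Fin n → ℕ)}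
variable (A : SolvMul R n ord)

lemma smul_star (c : R) (f g : SPoly R n) : A.star (c • f) g = c • A.star f g := by
  rw [← A.scalar_star c f, A.star_assoc, A.scalar_star]

lemma sum_star {ι : Type*} (s : Finset ι) (F : ι → SPoly R n) (g : SPoly R n) :
    A.star (∑ i ∈ s, F i) g = ∑ i ∈ s, A.star (F i) g :=
  map_sum (AddMonoidHom.mk' (A.star · g) fun f f' => A.add_star f f' g) F s

lemma star_sum {ι : Type*} (s : Finset ι) (f : SPoly R n) (F : ι → SPoly R n) :
    A.star f (∑ i ∈ s, F i) = ∑ i ∈ s, A.star f (F i) :=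
  map_sum (AddMonoidHom.mk' (A.star f) (A.star_add f)) F s

variable [IsDomain R]

lemma lexp_star_monomial {f : SPoly R n} (hf : f ≠ 0) (ν : Fin n → ℕ) :
    A.star f (Finsupp.single ν 1) ≠ 0 ∧
      lexp ord (A.star f (Finsupp.single ν 1)) = lexp ord f + ν := by
  have hterm : ∀ ρ ∈ f.support,
      f ρ • A.star (Finsupp.single ρ 1) (Finsupp.single ν 1) ≠ 0 ∧
      lexp ord (f ρ • A.star (Finsupp.single ρ 1) (Finsupp.single ν 1)) = ρ + ν :=
    fun ρ hρ =>
      ⟨smul_ne_zero (Finsupp.mem_support_iff.1 hρ) (A.mono_mono ρ ν).1,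
        (lexp_smul ord (Finsupp.mem_support_iff.1 hρ)).trans (A.mono_mono ρ ν).2⟩
  have hsum : A.star f (Finsupp.single ν 1) =
      ∑ ρ ∈ f.support, f ρ • A.star (Finsupp.single ρ 1) (Finsupp.single ν 1) := by
    conv_lhs => rw [← Finsupp.sum_single f, Finsupp.sum, sum_star]
    refine Finset.sum_congr rfl fun ρ _ => ?_
    rw [← smul_star, Finsupp.smul_single_one]
  have hlead := lexp_mem_support ord hf
  rw [hsum, ← (hterm _ hlead).2]
  refine lexp_sum_of_lt ord hlead (fun ρ hρ => (hterm ρ hρ).1) fun ρ hρ hne => ?_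
  rw [(hterm ρ hρ).2, (hterm _ hlead).2]
  exact A.add_compat ρ _ ν (@lt_of_le_of_ne _ ord.toPartialOrder _ _
    (le_lexp_of_mem_support ord hρ) hne)

lemma lexp_monomial_star {g : SPoly R n} (hg : g ≠ 0) (σ : Fin n → ℕ) :
    A.star (Finsupp.single σ 1) g ≠ 0 ∧
      lexp ord (A.star (Finsupp.single σ 1) g) = σ + lexp ord g := by
  have hterm : ∀ ν ∈ g.support,
      A.star (A.star (Finsupp.single σ 1) (Finsupp.single 0 (g ν)))
        (Finsupp.single ν 1) ≠ 0 ∧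
      lexp ord (A.star (A.star (Finsupp.single σ 1) (Finsupp.single 0 (g ν)))
        (Finsupp.single ν 1)) = σ + ν := fun ν hν => by
    obtain ⟨hne, hlexp⟩ := A.mono_scalar σ (g ν) (Finsupp.mem_support_iff.1 hν)
    obtain ⟨hne', hlexp'⟩ := A.lexp_star_monomial hne ν
    exact ⟨hne', hlexp'.trans (by rw [hlexp])⟩
  have hsum : A.star (Finsupp.single σ 1) g = ∑ ν ∈ g.support,
      A.star (A.star (Finsupp.single σ 1) (Finsupp.single 0 (g ν))) (Finsupp.single ν 1) := by
    conv_lhs => rw [← Finsupp.sum_single g, Finsupp.sum, star_sum]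
    refine Finset.sum_congr rfl fun ν _ => ?_
    rw [A.star_assoc, A.scalar_star, Finsupp.smul_single_one]
  have hlead := lexp_mem_support ord hg
  rw [hsum, ← (hterm _ hlead).2]
  refine lexp_sum_of_lt ord hlead (fun ν hν => (hterm ν hν).1) fun ν hν hne => ?_
  rw [(hterm ν hν).2, (hterm _ hlead).2, add_comm σ, add_comm σ]
  exact A.add_compat ν _ σ (@lt_of_le_of_ne _ ord.toPartialOrder _ _
    (le_lexp_of_mem_support ord hν) hne)

end SolvMul

section Cones

variable {n : ℕ}

lemma rcone_mono {N N' : Set (Fin n)} (h : N ⊆ N') (ν : Fin n → ℕ) : rcone N ν ⊆ rcone N' ν :=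
  fun _ hμ => ⟨hμ.1, fun i hi => hμ.2 i (hi ∘ @h i)⟩

lemma mem_rcone_self (N : Set (Fin n)) (ν : Fin n → ℕ) : ν ∈ rcone N ν :=
  ⟨fun _ => le_rfl, fun _ _ => rfl⟩

/-- By `L.mono` the cones of the smaller set `𝒩'` are larger; `hU` keeps them inside `U`. -/
lemma InvDiv.iUnion_rcone_eq_of_subset (L : InvDiv n) {𝒩 𝒩' : Finset (Fin n → ℕ)}
    {U : Set (Fin n → ℕ)} (hsub : 𝒩' ⊆ 𝒩)
    (hcover : ∀ μ ∈ 𝒩, ∃ ν ∈ 𝒩', rcone (L.mult 𝒩 μ) μ ⊆ rcone (L.mult 𝒩 ν) ν)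
    (hU : ∀ μ ∈ U, ∀ τ, (∀ i, μ i ≤ τ i) → τ ∈ U)
    (hunion : ⋃ μ ∈ 𝒩, rcone (L.mult 𝒩 μ) μ = U) :
    ⋃ ν ∈ 𝒩', rcone (L.mult 𝒩' ν) ν = U := by
  subst hunion
  refine subset_antisymm (Set.iUnion₂_subset fun ν hν τ hτ => ?_)
    (Set.iUnion₂_subset fun μ hμ τ hτ => ?_)
  · exact hU ν (Set.mem_biUnion (hsub hν) (mem_rcone_self _ ν)) τ hτ.1
  · obtain ⟨ν, hν, hcone⟩ := hcover μ hμ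
    exact Set.mem_biUnion hν (rcone_mono (L.mono 𝒩 𝒩' hsub ν hν) ν (hcone hτ))

end Cones

section InvolutiveBasis

variable {R : Type} [CommRing R] {n : ℕ} {ord : LinearOrder (Fin n → ℕ)}

lemma mem_leadExps_of_le [IsDomain R] (A : SolvMul R n ord) {I : Set (SPoly R n)}
    (hImul : ∀ f ∈ I, ∀ p : SPoly R n, A.star p f ∈ I) {μ τ : Fin n → ℕ}
    (hμ : μ ∈ leadExps ord I) (hτ : ∀ i, μ i ≤ τ i) : τ ∈ leadExps ord I := by
  obtain ⟨h, hhI, hh0, rfl⟩ := hμ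
  obtain ⟨hne, hlexp⟩ := A.lexp_monomial_star hh0 (τ - lexp ord h)
  exact ⟨_, hImul h hhI _, hne, hlexp.trans (tsub_add_cancel_of_le hτ)⟩

variable [DecidableEq (SPoly R n)]

lemma lexp_mem_leadSet_erase {s : Finset (SPoly R n)} {h k : SPoly R n} (hk : k ∈ s)
    (hkh : k ≠ h) : lexp ord k ∈ leadSet ord (s.erase h) :=
  Finset.mem_image_of_mem _ (Finset.mem_erase.2 ⟨hkh, hk⟩)

lemma leadSet_subset_insert_erase (s : Finset (SPoly R n)) (h : SPoly R n) :
    leadSet ord s ⊆ insert (lexp ord h) (leadSet ord (s.erase h)) := by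
  rw [leadSet, leadSet, ← Finset.image_insert]
  exact Finset.image_subset_image (Finset.insert_erase_subset h s)

lemma WeakInvBasis.erase [IsDomain R] (A : SolvMul R n ord) {L : InvDiv n}
    {I : Set (SPoly R n)} (hImul : ∀ f ∈ I, ∀ p : SPoly R n, A.star p f ∈ I)
    {s : Finset (SPoly R n)} (hs : WeakInvBasis ord L I s) {h : SPoly R n} {ν : Fin n → ℕ}
    (hν : ν ∈ leadSet ord (s.erase h))
    (hcone : rcone (L.mult (leadSet ord s) (lexp ord h)) (lexp ord h) ⊆
      rcone (L.mult (leadSet ord s) ν) ν) :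
    WeakInvBasis ord L I (s.erase h) := by
  obtain ⟨hsI, hs0, hunion⟩ := hs
  have hsub : leadSet ord (s.erase h) ⊆ leadSet ord s :=
    Finset.image_subset_image (Finset.erase_subset h s)
  refine ⟨fun _ hk => hsI (Finset.mem_of_mem_erase hk),
    fun h0 => hs0 (Finset.mem_of_mem_erase h0),
    L.iUnion_rcone_eq_of_subset hsub (fun μ hμ => ?_)
      (fun _ hμ _ => mem_leadExps_of_le A hImul hμ) hunion⟩
  rcases Finset.mem_insert.1 (leadSet_subset_insert_erase s h hμ) with rfl | hμ'
  · exact ⟨ν, hν, hcone⟩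
  · exact ⟨μ, hμ', subset_rfl⟩

lemma WeakInvBasis.strongInvBasis_or_exists_erase [IsDomain R] (A : SolvMul R n ord)
    {L : InvDiv n} {I : Set (SPoly R n)} (hImul : ∀ f ∈ I, ∀ p : SPoly R n, A.star p f ∈ I)
    {s : Finset (SPoly R n)} (hs : WeakInvBasis ord L I s) :
    StrongInvBasis ord L I s ∨ ∃ h ∈ s, WeakInvBasis ord L I (s.erase h) := by
  by_cases hdisj : ∀ μ ∈ leadSet ord s, ∀ ν ∈ leadSet ord s, μ ≠ ν →
      Disjoint (rcone (L.mult (leadSet ord s) μ) μ) (rcone (L.mult (leadSet ord s) ν) ν)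
  · by_cases hinj : Set.InjOn (lexp ord) (↑s : Set (SPoly R n))
    · exact Or.inl ⟨hs, hinj, hdisj⟩
    · obtain ⟨a, ha, b, hb, hab, hne⟩ : ∃ a ∈ s, ∃ b ∈ s, lexp ord a = lexp ord b ∧ a ≠ b := by
        simpa [Set.InjOn] using hinj
      refine Or.inr ⟨a, ha, hs.erase A hImul ?_ subset_rfl⟩
      exact hab ▸ lexp_mem_leadSet_erase hb (Ne.symm hne)
  · push Not at hdisj
    obtain ⟨μ, hμ, ν, hν, hμν, hmeet⟩ := hdisj
    have herase : ∀ μ ∈ leadSet ord s, ∀ ν ∈ leadSet ord s, μ ≠ ν →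
        rcone (L.mult (leadSet ord s) μ) μ ⊆ rcone (L.mult (leadSet ord s) ν) ν →
        ∃ h ∈ s, WeakInvBasis ord L I (s.erase h) := by
      rintro _ hμ _ hν hμν hcone
      obtain ⟨h, hh, rfl⟩ := Finset.mem_image.1 hμ
      obtain ⟨k, hk, rfl⟩ := Finset.mem_image.1 hν
      have hkh : k ≠ h := by rintro rfl; exact hμν rfl
      exact ⟨h, hh, hs.erase A hImul (lexp_mem_leadSet_erase hk hkh) hcone⟩
    refine Or.inr ?_
    rcases L.nested _ μ hμ ν hν (Set.not_disjoint_iff_nonempty_inter.1 hmeet) with hcone | hcone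
    · exact herase μ hμ ν hν hμν hcone
    · exact herase ν hν μ hμ hμν.symm hcone

end InvolutiveBasis

theorem stmt15_general {K : Type} [Field K] {n : ℕ} (ord : LinearOrder (Fin n → ℕ))
    (A : SolvMul K n ord) (L : InvDiv n) (I : Set (SPoly K n))
    (hImul : ∀ f ∈ I, ∀ p : SPoly K n, A.star p f ∈ I)
    (ℋ : Finset (SPoly K n)) (hweak : WeakInvBasis ord L I ℋ) :
    ∃ ℋ' ⊆ ℋ, StrongInvBasis ord L I ℋ' := by
  classical
  induction ℋ using Finset.strongInduction with
  | H s ih =>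
    rcases hweak.strongInvBasis_or_exists_erase A hImul with hstrong | ⟨h, hh, herase⟩
    · exact ⟨s, subset_rfl, hstrong⟩
    · obtain ⟨s', hs', hstrong⟩ := ih (s.erase h) (Finset.erase_ssubset hh) herase
      exact ⟨s', hs'.trans (Finset.erase_subset h s), hstrong⟩

/-- Every weak involutive basis of a left ideal `I` in a polynomial algebra of
solvable type over a field contains a subset which is a strong involutive basis
of `I`. -/
theorem stmt15 {K : Type} [Field K] {n : ℕ} (ord : LinearOrder (Fin n → ℕ))
    (A : SolvMul K n ord) (L : InvDiv n) (I : Set (SPoly K n))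
    (hI0 : (0 : SPoly K n) ∈ I)
    (hIadd : ∀ f ∈ I, ∀ g ∈ I, f + g ∈ I)
    (hIneg : ∀ f ∈ I, -f ∈ I)
    (hImul : ∀ f ∈ I, ∀ p : SPoly K n, A.star p f ∈ I)
    (ℋ : Finset (SPoly K n)) (hweak : WeakInvBasis ord L I ℋ) :
    ∃ ℋ' ⊆ ℋ, StrongInvBasis ord L I ℋ' :=
  stmt15_general ord A L I hImul ℋ hweak
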